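/- The entropy H_n of the random-BST shape distribution satisfies H_n ~ c·n as n → ∞, where c = 2 Σ_{i=2}^{∞} lg(i)/((i+2)(i+1)), i.e., H_n / n converges to c. -/

import Mathlib

open Filter Real

/-- Binary trees: empty (`leaf`) or a node with left and right subtrees. -/
inductive BinTree where
  | leaf : BinTree
  | node : BinTree → BinTree → BinTree
deriving DecidableEq, Repr

namespace BinTree

/-- Number of nodes. -/
def size : BinTree → ℕ
  | leaf => 0
  | node l r => l.size + r.size + 1

/-- Product of subtree sizes over all nodes: `∏_{v∈t} st(v)`. -/
def stProd : BinTree → ℕ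
  | leaf => 1
  | node l r => (node l r).size * l.stProd * r.stProd

/-- Subtree-size entropy: `H_st(t) = ∑_{v∈t} lg st(v)`. -/
noncomputable def stEntropy : BinTree → ℝ
  | leaf => 0
  | node l r => Real.logb 2 ((node l r).size : ℝ) + l.stEntropy + r.stEntropy

/-- Size of the left subtree of the root. -/
def leftSize : BinTree → ℕ
  | leaf => 0
  | node l _ => l.size

/-- Every node has at most one (nonempty) child. -/
def isPath : BinTree → Prop
  | leaf => True
  | node l r => (l = leaf ∨ r = leaf) ∧ l.isPath ∧ r.isPath

/-- At every node the sizes of the two subtrees differ by at most 1. -/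
def isBalanced : BinTree → Prop
  | leaf => True
  | node l r => ((l.size : ℤ) - (r.size : ℤ)).natAbs ≤ 1 ∧ l.isBalanced ∧ r.isBalanced

/-- Number of leaves (nodes with no children). -/
def leafCount : BinTree → ℕ
  | leaf => 0
  | node l r => (if l = leaf ∧ r = leaf then 1 else 0) + l.leafCount + r.leafCount

/-- Number of binary nodes (both children present). -/
def binCount : BinTree → ℕ
  | leaf => 0
  | node l r => (if l ≠ leaf ∧ r ≠ leaf then 1 else 0) + l.binCount + r.binCount

/-- Number of nodes with only a left child. -/
def leftOnlyCount : BinTree → ℕ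
  | leaf => 0
  | node l r => (if l ≠ leaf ∧ r = leaf then 1 else 0) + l.leftOnlyCount + r.leftOnlyCount

/-- Number of nodes with only a right child. -/
def rightOnlyCount : BinTree → ℕ
  | leaf => 0
  | node l r => (if l = leaf ∧ r ≠ leaf then 1 else 0) + l.rightOnlyCount + r.rightOnlyCount

end BinTree

/-- Cartesian tree construction with explicit fuel (fuel ≥ length suffices). -/
def cartesianAux : ℕ → List ℕ → BinTree
  | 0, _ => .leaf
  | _ + 1, [] => .leaf
  | fuel + 1, x :: xs =>
      let m := List.foldl min x xs
      let i := (x :: xs).idxOf m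
      .node (cartesianAux fuel ((x :: xs).take i)) (cartesianAux fuel ((x :: xs).drop (i + 1)))

/-- The Cartesian tree of a list: root at the (first) minimum, left/right
subtrees built recursively from the prefix/suffix. -/
def cartesian (l : List ℕ) : BinTree := cartesianAux l.length l

/-- The array `A[1..n]` (as a list) associated with a permutation of `Fin n`. -/
def permList {n : ℕ} (p : Equiv.Perm (Fin n)) : List ℕ := List.ofFn fun k => (p k : ℕ)

/-- All binary trees with exactly `n` nodes. -/
def treesOfSize : ℕ → Finset BinTree
  | 0 => {BinTree.leaf}
  | n + 1 =>
    (Finset.range (n + 1)).attach.biUnion fun i =>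
      ((treesOfSize i.1) ×ˢ (treesOfSize (n - i.1))).image fun p => BinTree.node p.1 p.2
termination_by n => n
decreasing_by
  · exact Nat.lt_succ_of_le (Nat.le_of_lt_succ (Finset.mem_range.mp i.2))
  · exact Nat.lt_succ_of_le (Nat.sub_le n i.1)

/-- Shannon entropy (base 2) of the random-BST shape distribution on `n` nodes,
which assigns probability `1/stProd t` to each tree `t` on `n` nodes. -/
noncomputable def shapeEntropy (n : ℕ) : ℝ :=
  - ∑ t ∈ treesOfSize n, (1 / (t.stProd : ℝ)) * Real.logb 2 (1 / (t.stProd : ℝ))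

/-- Expectation of `f` under the random-BST shape distribution on `n` nodes. -/
noncomputable def expCount (f : BinTree → ℕ) (n : ℕ) : ℝ :=
  ∑ t ∈ treesOfSize n, (1 / (t.stProd : ℝ)) * (f t : ℝ)

/-- The entropy recurrence: `H 0 = H 1 = 0`, `H n = lg n + (2/n) ∑_{i<n} H i`. -/
noncomputable def Hrec : ℕ → ℝ
  | 0 => 0
  | 1 => 0
  | n + 2 =>
      Real.logb 2 ((n + 2 : ℕ) : ℝ) +
        (2 / ((n + 2 : ℕ) : ℝ)) * ∑ i ∈ (Finset.range (n + 2)).attach, Hrec i.1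
termination_by n => n
decreasing_by exact Finset.mem_range.mp i.2

/-- `rmq_A(i,j)` (1-based): the position of the (first) minimum of `A[i..j]`. -/
def rmqFun (A : List ℕ) (i j : ℕ) : ℕ :=
  let s := (A.drop (i - 1)).take (j - i + 1)
  i + s.idxOf (List.foldl min (s.headD 0) s)

/-- The inorder rank of the LCA of the nodes with inorder ranks `i` and `j`. -/
def lcaInorder : BinTree → ℕ → ℕ → ℕ
  | .leaf, _, _ => 0
  | .node l r, i, j =>
      let m := l.size + 1
      if i < m ∧ j < m then lcaInorder l i j
      else if m < i ∧ m < j then m + lcaInorder r (i - m) (j - m)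
      else m

/-- The subtree rooted at the node reached from the root by the given
left(`false`)/right(`true`) directions, if it exists. -/
def subAt : BinTree → List Bool → Option BinTree
  | t, [] => some t
  | .leaf, _ :: _ => none
  | .node l _, false :: p => subAt l p
  | .node _ r, true :: p => subAt r p

/-- Subtree size of the node at a position (0 if there is no node there). -/
def stAt (t : BinTree) (pos : List Bool) : ℕ := ((subAt t pos).getD .leaf).size

/-- Left-subtree size of the node at a position. -/
def lsAt (t : BinTree) (pos : List Bool) : ℕ := ((subAt t pos).getD .leaf).leftSize

/-- `Pruned μ s`: `μ` is obtained from `s` by replacing some subtrees by `leaf`. -/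
inductive Pruned : BinTree → BinTree → Prop
  | leaf (t) : Pruned .leaf t
  | node {l' r' l r} : Pruned l' l → Pruned r' r → Pruned (.node l' r') (.node l r)

/-- `PrunedN k μ s`: `μ` is obtained from `s` by pruning exactly `k` (nonempty) subtrees. -/
inductive PrunedN : ℕ → BinTree → BinTree → Prop
  | refl (t) : PrunedN 0 t t
  | prune (l r) : PrunedN 1 .leaf (.node l r)
  | node {a b l' r' l r} : PrunedN a l' l → PrunedN b r' r → PrunedN (a + b) (.node l' r') (.node l r)

/-- `IsSubtree s t`: `s` is the subtree of `t` rooted at some node (or `t` itself). -/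
inductive IsSubtree : BinTree → BinTree → Prop
  | refl (t) : IsSubtree t t
  | left {s l r} : IsSubtree s l → IsSubtree s (.node l r)
  | right {s l r} : IsSubtree s r → IsSubtree s (.node l r)

/-- `∑_{v∈μ} lg st_s(v)`: sum over the nodes of `μ` of the log-subtree-sizes
taken in the host tree `s` (for `μ` pruned from `s`). -/
noncomputable def mixedEntropy : BinTree → BinTree → ℝ
  | .leaf, _ => 0
  | .node _ _, .leaf => 0
  | .node l' r', .node l r =>
      Real.logb 2 ((BinTree.node l r).size : ℝ) + mixedEntropy l' l + mixedEntropy r' r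

/-- 1-based preorder index of the node at a position (0 if no node there). -/
def preorderIdx : BinTree → List Bool → ℕ
  | _, [] => 1
  | .leaf, _ :: _ => 0
  | .node l _, false :: p => 1 + preorderIdx l p
  | .node l r, true :: p => 1 + l.size + preorderIdx r p

/-- 1-based inorder index of the node at a position. -/
def inorderIdx : BinTree → List Bool → ℕ
  | t, [] => t.leftSize + 1
  | .leaf, _ :: _ => 0
  | .node l _, false :: p => inorderIdx l p
  | .node l r, true :: p => l.size + 1 + inorderIdx r p

/-- Binary entropy function (base 2). -/
noncomputable def binH (x : ℝ) : ℝ := -x * Real.logb 2 x - (1 - x) * Real.logb 2 (1 - x)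

open Finset Topology

/-!
Multiplying the recurrence by `n` and subtracting the same identity for `n - 1` leaves a
first-order recurrence, which solves to the closed form
`H (n + 2) = 2 (n + 3) ∑_{i<n} lg (i + 2) / ((i + 4)(i + 3)) + lg (n + 2)`.
The series converges because `lg x = O(√x)`, and `lg n / n → 0`, so `H n / n` tends to twice
its sum.
-/

noncomputable def hrecTerm (i : ℕ) : ℝ :=
  logb 2 ((i : ℝ) + 2) / (((i : ℝ) + 4) * ((i : ℝ) + 3))

lemma hrec_add_two (n : ℕ) : Hrec (n + 2) =
    logb 2 ((n : ℝ) + 2) + 2 / ((n : ℝ) + 2) * ∑ i ∈ range (n + 2), Hrec i := by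
  rw [Hrec, sum_attach (range (n + 2)) Hrec]
  push_cast
  rfl

lemma sum_range_hrec (n : ℕ) : ∑ i ∈ range (n + 2), Hrec i =
    ((n : ℝ) + 2) * ((n : ℝ) + 3) * ∑ i ∈ range n, hrecTerm i := by
  induction n with
  | zero => simp [sum_range_succ, Hrec]
  | succ n ih =>
    rw [sum_range_succ, hrec_add_two, ih, sum_range_succ, hrecTerm]
    push_cast
    field_simp
    ring

lemma hrec_add_two_eq (n : ℕ) : Hrec (n + 2) =
    2 * ((n : ℝ) + 3) * ∑ i ∈ range n, hrecTerm i + logb 2 ((n : ℝ) + 2) := by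
  rw [hrec_add_two, sum_range_hrec]
  field_simp
  ring

lemma hrecTerm_nonneg (i : ℕ) : 0 ≤ hrecTerm i := by
  have : 0 ≤ logb 2 ((i : ℝ) + 2) :=
    logb_nonneg one_lt_two (by linarith [i.cast_nonneg (α := ℝ)])
  unfold hrecTerm
  positivity

lemma hrecTerm_le (i : ℕ) : hrecTerm i ≤ 2 / log 2 * ((i : ℝ) + 2) ^ (-3 / 2 : ℝ) := by
  set x : ℝ := (i : ℝ) + 2 with hx
  have hx0 : 0 < x := by positivity
  have hlog : log x ≤ 2 * x ^ (-3 / 2 : ℝ) * ((x + 2) * (x + 1)) := by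
    have hsqrt : x ^ (1 / 2 : ℝ) = x ^ (-3 / 2 : ℝ) * x ^ 2 := by
      rw [← rpow_natCast, ← rpow_add hx0]; norm_num
    calc log x ≤ x ^ (1 / 2 : ℝ) / (1 / 2) := log_le_rpow_div hx0.le one_half_pos
      _ = 2 * x ^ (-3 / 2 : ℝ) * x ^ 2 := by rw [hsqrt]; ring
      _ ≤ 2 * x ^ (-3 / 2 : ℝ) * ((x + 2) * (x + 1)) := by gcongr; nlinarith
  have hterm : hrecTerm i = log x / log 2 / ((x + 2) * (x + 1)) := by
    rw [hrecTerm, logb, hx]; ring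
  rw [hterm, div_div, div_le_iff₀ (by positivity)]
  have := log_pos one_lt_two
  calc log x ≤ 2 * x ^ (-3 / 2 : ℝ) * ((x + 2) * (x + 1)) := hlog
    _ = 2 / log 2 * x ^ (-3 / 2 : ℝ) * (log 2 * ((x + 2) * (x + 1))) := by field_simp

lemma summable_hrecTerm : Summable hrecTerm := by
  refine .of_nonneg_of_le hrecTerm_nonneg hrecTerm_le (.mul_left _ ?_)
  have := (summable_nat_add_iff 2).mpr (summable_nat_rpow.mpr (by norm_num : (-3 / 2 : ℝ) < -1))
  simpa using this

lemma tendsto_logb_div_self_atTop (b : ℝ) : Tendsto (fun x => logb b x / x) atTop (𝓝 0) := by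
  have := isLittleO_log_id_atTop.tendsto_div_nhds_zero.div_const (log b)
  simpa only [id, zero_div, logb, div_right_comm] using this

/-- `H_n ~ c n` where `c = 2 ∑_{i≥2} lg i / ((i+2)(i+1))`, i.e. `H_n/n → c`. -/
theorem stmt4 :
    Filter.Tendsto (fun n : ℕ => Hrec n / (n : ℝ)) Filter.atTop
      (nhds (2 * ∑' i : ℕ,
        Real.logb 2 ((i : ℝ) + 2) / (((i : ℝ) + 4) * ((i : ℝ) + 3)))) := by
  rw [← tendsto_add_atTop_iff_nat 2]
  have hsplit (n : ℕ) : Hrec (n + 2) / ((n + 2 : ℕ) : ℝ) = 2 * ∑ i ∈ range n, hrecTerm i +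
      (((n : ℝ) + 2)⁻¹ * (2 * ∑ i ∈ range n, hrecTerm i) +
        logb 2 ((n : ℝ) + 2) / ((n : ℝ) + 2)) := by
    rw [hrec_add_two_eq]; push_cast; field_simp; ring
  simp only [hsplit]
  have hpartial := summable_hrecTerm.hasSum.tendsto_sum_nat.const_mul 2
  have hshift : Tendsto (fun n : ℕ => (n : ℝ) + 2) atTop atTop :=
    tendsto_atTop_add_const_right _ 2 tendsto_natCast_atTop_atTop
  have hinv : Tendsto (fun n : ℕ => ((n : ℝ) + 2)⁻¹) atTop (𝓝 0) :=
    tendsto_inv_atTop_zero.comp hshift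
  simpa [hrecTerm] using
    hpartial.add ((hinv.mul hpartial).add ((tendsto_logb_div_self_atTop 2).comp hshift))
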